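/- arXiv:1709.08986 — 2 statements merged into one kernel-verified Lean document; each statement's English description precedes it below -/
import Mathlib

section
/- Under the parameter correspondence \chi_0 = 1/\ell + (\kappa_0 - \kappa_1) + (\kappa_{0,0} - \kappa_{0,1}) - 1 and \chi_i = 1/\ell + (\kappa_i - \kappa_{i+1}) for 1 \le i \le \ell-1 (indices of \kappa mod \ell), the condition \chi \cdot \alpha \notin \mathbb{Z} for all \alpha \in \mathcal{R}_n is equivalent to the conjunction of: (A) \kappa_{0,0} - \kappa_{0,1} + j/m \notin \mathbb{Z} for all 1 \le m \le n and integers j coprime to m; (B) m(\kappa_{0,0} - \kappa_{0,1}) + (\kappa_i - \kappa_{j+1}) + (j+1-i)/\ell \notin \mathbb{Z} for 0 \le m \le n-1, 1 \le i \le j \le \ell-1; and (C) m(\kappa_{0,0} - \kappa_{0,1}) - (\kappa_i - \kappa_{j+1}) - (j+1-i)/\ell \notin \mathbb{Z} for 1 \le m \le n-1, 1 \le i \le j \le \ell-1. -/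
/-- The segment root `ε_i + ε_{i+1} + ⋯ + ε_j`. -/
def segVec (ℓ : ℕ) (i j : ℕ) : ZMod ℓ → ℤ :=
  fun s => ∑ t ∈ Finset.Icc i j, if ((t : ZMod ℓ) = s) then 1 else 0

/-- The minimal imaginary root `δ = ε_0 + ⋯ + ε_{ℓ-1}`. -/
def deltaVec (ℓ : ℕ) : ZMod ℓ → ℤ := fun _ => 1

/-- The finite root system `Φ` of type `A_{ℓ-1}`. -/
def PhiSet (ℓ : ℕ) : Set (ZMod ℓ → ℤ) :=
  {α | ∃ i j : ℕ, 1 ≤ i ∧ i ≤ j ∧ j ≤ ℓ - 1 ∧ (α = segVec ℓ i j ∨ α = -segVec ℓ i j)}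

/-- The positive roots `R⁺` of affine type `Ã_{ℓ-1}`. -/
def RPosSet (ℓ : ℕ) : Set (ZMod ℓ → ℤ) :=
  {α | (∃ m : ℕ, α = m • deltaVec ℓ ∨ ∃ β ∈ PhiSet ℓ, α = m • deltaVec ℓ + β) ∧
    α ≠ 0 ∧ ∀ s, 0 ≤ α s}

/-- The set `ℛ_n = {α ∈ R⁺ : ε₀ · α < n} ∪ {nδ}`. -/
def RnSet (ℓ n : ℕ) : Set (ZMod ℓ → ℤ) :=
  {α ∈ RPosSet ℓ | α 0 < (n : ℤ)} ∪ {(n : ℤ) • deltaVec ℓ}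

/-- Pairing `χ · α = ∑ χ_s α_s`. -/
noncomputable def dotC (ℓ : ℕ) [NeZero ℓ] (χ : ZMod ℓ → ℂ) (α : ZMod ℓ → ℤ) : ℂ :=
  ∑ s : ZMod ℓ, χ s * α s

/-!
The roots in `ℛ_n` are `mδ` with `1 ≤ m ≤ n` and `mδ ± (ε_i + ⋯ + ε_j)` with
`1 ≤ i ≤ j ≤ ℓ - 1` and `m < n` (`m ≥ 1` for the minus sign). Pairing with `χ`, the `κ`-differences
cancel around `ℤ/ℓ` in `χ · δ = κ₀₀ - κ₀₁`, and telescope in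
`χ · (ε_i + ⋯ + ε_j) = κ_i - κ_{j+1} + (j + 1 - i)/ℓ`, which gives (B) and (C). Condition (A) just
says that no `m(κ₀₀ - κ₀₁)` with `1 ≤ m ≤ n` is an integer: if one is, `κ₀₀ - κ₀₁` is a fraction
whose reduced denominator divides `m`.
-/

theorem Rat.den_div_natCast_dvd (z : ℤ) (m : ℕ) : ((z : ℚ) / m).den ∣ m := by
  have h := Rat.den_dvd z m
  rw [Rat.divInt_eq_div, Int.cast_natCast] at h
  exact_mod_cast h

theorem exists_coprime_add_div_eq_zero {K : Type*} [Field K] [CharZero K] {c : K} {m : ℕ}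
    (hm : m ≠ 0) {z : ℤ} (h : (m : K) * c = z) :
    ∃ (d : ℕ) (j : ℤ), 1 ≤ d ∧ d ≤ m ∧ Int.gcd j d = 1 ∧ c + j / d = 0 := by
  set q : ℚ := (z : ℚ) / m
  have hc : c = q := by
    rw [eq_comm, ← mul_right_inj' (Nat.cast_ne_zero.2 hm : (m : K) ≠ 0), h]
    push_cast [q]
    field_simp
  refine ⟨q.den, -q.num, q.pos, Nat.le_of_dvd (Nat.pos_of_ne_zero hm) (Rat.den_div_natCast_dvd z m),
    ?_, ?_⟩
  · simpa [Int.gcd] using q.reduced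
  · rw [hc, Rat.cast_def]
    push_cast
    ring

theorem forall_natCast_mul_not_int_iff_forall_add_div_not_int {K : Type*} [Field K] [CharZero K]
    (c : K) (n : ℕ) :
    (∀ m : ℕ, 1 ≤ m → m ≤ n → ¬ ∃ z : ℤ, (m : K) * c = z) ↔
      ∀ (m : ℕ) (j : ℤ), 1 ≤ m → m ≤ n → Int.gcd j (m : ℤ) = 1 →
        ¬ ∃ z : ℤ, c + (j : K) / (m : K) = z := by
  constructor
  · rintro H m j hm hmn - ⟨z, hz⟩
    refine H m hm hmn ⟨m * z - j, ?_⟩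
    have hm0 : (m : K) ≠ 0 := Nat.cast_ne_zero.2 (by omega)
    push_cast
    rw [← hz]
    field_simp
    ring
  · rintro H m hm hmn ⟨z, hz⟩
    obtain ⟨d, j, hd, hdm, hj, hc⟩ := exists_coprime_add_div_eq_zero (by omega) hz
    exact H d j hd (hdm.trans hmn) hj ⟨0, by rw [hc, Int.cast_zero]⟩

section Roots

variable {ℓ : ℕ}

theorem nsmul_deltaVec_apply (m : ℕ) (s : ZMod ℓ) : (m • deltaVec ℓ) s = m := by
  simp [deltaVec]

theorem segVec_nonneg (i j : ℕ) (s : ZMod ℓ) : 0 ≤ segVec ℓ i j s :=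
  Finset.sum_nonneg fun _ _ => by split_ifs <;> norm_num

variable {n m : ℕ}

theorem nsmul_deltaVec_mem_RnSet (hm : 1 ≤ m) (hmn : m ≤ n) : m • deltaVec ℓ ∈ RnSet ℓ n := by
  rcases hmn.lt_or_eq with hmn | rfl
  · refine Or.inl ⟨⟨⟨m, Or.inl rfl⟩, fun h => ?_, fun s => ?_⟩, ?_⟩
    · have := congrFun h 0
      simp only [nsmul_deltaVec_apply, Pi.zero_apply] at this
      omega
    · rw [nsmul_deltaVec_apply]
      omega
    · rw [nsmul_deltaVec_apply]
      omega
  · exact Or.inr (natCast_zsmul (deltaVec ℓ) m).symm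

variable [NeZero ℓ] {i j : ℕ}

theorem segVec_apply_of_le (hj : j ≤ ℓ - 1) (s : ZMod ℓ) :
    segVec ℓ i j s = if s.val ∈ Finset.Icc i j then 1 else 0 := by
  have hℓ : 0 < ℓ := Nat.pos_of_ne_zero (NeZero.ne ℓ)
  have hcast : ∀ t ∈ Finset.Icc i j, ((t : ZMod ℓ) = s ↔ t = s.val) := fun t ht => by
    rw [Finset.mem_Icc] at ht
    constructor
    · rintro rfl
      rw [ZMod.val_cast_of_lt (by omega)]
    · rintro rfl
      rw [ZMod.natCast_val, ZMod.cast_id]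
  rw [segVec, Finset.sum_congr rfl fun t ht => if_congr (hcast t ht) rfl rfl,
    Finset.sum_ite_eq']

theorem segVec_le_one (hj : j ≤ ℓ - 1) (s : ZMod ℓ) : segVec ℓ i j s ≤ 1 := by
  rw [segVec_apply_of_le hj]
  split_ifs <;> norm_num

theorem segVec_apply_zero (hi : 1 ≤ i) (hj : j ≤ ℓ - 1) : segVec ℓ i j 0 = 0 := by
  rw [segVec_apply_of_le hj, ZMod.val_zero, if_neg (by simp; omega)]

theorem segVec_apply_natCast_self (hij : i ≤ j) (hj : j ≤ ℓ - 1) : segVec ℓ i j i = 1 := by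
  rw [segVec_apply_of_le hj, ZMod.val_cast_of_lt (by have := NeZero.ne ℓ; omega),
    if_pos (Finset.mem_Icc.2 ⟨le_rfl, hij⟩)]

theorem nsmul_deltaVec_add_segVec_mem_RnSet (hmn : m < n) (hi : 1 ≤ i) (hij : i ≤ j)
    (hj : j ≤ ℓ - 1) : m • deltaVec ℓ + segVec ℓ i j ∈ RnSet ℓ n := by
  refine Or.inl ⟨⟨⟨m, Or.inr ⟨_, ⟨i, j, hi, hij, hj, Or.inl rfl⟩, rfl⟩⟩, fun h => ?_,
    fun s => ?_⟩, ?_⟩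
  · have := congrFun h i
    simp only [Pi.add_apply, nsmul_deltaVec_apply, segVec_apply_natCast_self hij hj,
      Pi.zero_apply] at this
    omega
  · have := segVec_nonneg i j s
    simp only [Pi.add_apply, nsmul_deltaVec_apply]
    omega
  · rw [Pi.add_apply, nsmul_deltaVec_apply, segVec_apply_zero hi hj]
    omega

theorem nsmul_deltaVec_sub_segVec_mem_RnSet (hm : 1 ≤ m) (hmn : m < n) (hi : 1 ≤ i)
    (hij : i ≤ j) (hj : j ≤ ℓ - 1) : m • deltaVec ℓ - segVec ℓ i j ∈ RnSet ℓ n := by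
  rw [sub_eq_add_neg]
  refine Or.inl ⟨⟨⟨m, Or.inr ⟨_, ⟨i, j, hi, hij, hj, Or.inr rfl⟩, rfl⟩⟩, fun h => ?_,
    fun s => ?_⟩, ?_⟩
  · have := congrFun h 0
    simp only [Pi.add_apply, Pi.neg_apply, nsmul_deltaVec_apply, segVec_apply_zero hi hj,
      Pi.zero_apply] at this
    omega
  · have := segVec_le_one (i := i) hj s
    simp only [Pi.add_apply, Pi.neg_apply, nsmul_deltaVec_apply]
    omega
  · rw [Pi.add_apply, Pi.neg_apply, nsmul_deltaVec_apply, segVec_apply_zero hi hj]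
    omega

theorem forall_mem_RnSet_iff (hn : 0 < n) (P : (ZMod ℓ → ℤ) → Prop) :
    (∀ α ∈ RnSet ℓ n, P α) ↔
      (∀ m : ℕ, 1 ≤ m → m ≤ n → P (m • deltaVec ℓ)) ∧
      (∀ m i j : ℕ, m < n → 1 ≤ i → i ≤ j → j ≤ ℓ - 1 → P (m • deltaVec ℓ + segVec ℓ i j)) ∧
      (∀ m i j : ℕ, 1 ≤ m → m < n → 1 ≤ i → i ≤ j → j ≤ ℓ - 1 →
        P (m • deltaVec ℓ - segVec ℓ i j)) := by
  refine ⟨fun H => ⟨fun m hm hmn => H _ (nsmul_deltaVec_mem_RnSet hm hmn),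
    fun m i j hmn hi hij hj => H _ (nsmul_deltaVec_add_segVec_mem_RnSet hmn hi hij hj),
    fun m i j hm hmn hi hij hj => H _ (nsmul_deltaVec_sub_segVec_mem_RnSet hm hmn hi hij hj)⟩, ?_⟩
  rintro ⟨hδ, hplus, hminus⟩ α
    (⟨⟨⟨m, rfl | ⟨β, ⟨i, j, hi, hij, hj, rfl | rfl⟩, rfl⟩⟩, hne, hpos⟩, hlt⟩ | rfl)
  · have hm : m ≠ 0 := by
      rintro rfl
      exact hne (zero_smul ℕ _)
    rw [nsmul_deltaVec_apply] at hlt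
    exact hδ m (by omega) (by omega)
  · rw [Pi.add_apply, nsmul_deltaVec_apply, segVec_apply_zero hi hj] at hlt
    exact hplus m i j (by omega) hi hij hj
  · have hm := hpos i
    rw [Pi.add_apply, Pi.neg_apply, nsmul_deltaVec_apply, segVec_apply_natCast_self hij hj] at hm
    rw [Pi.add_apply, Pi.neg_apply, nsmul_deltaVec_apply, segVec_apply_zero hi hj] at hlt
    rw [← sub_eq_add_neg]
    exact hminus m i j (by omega) (by omega) hi hij hj
  · rw [natCast_zsmul]
    exact hδ n hn le_rfl

end Roots

section Pairing

variable {ℓ : ℕ} [NeZero ℓ] (χ : ZMod ℓ → ℂ)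

theorem dotC_add (α β : ZMod ℓ → ℤ) : dotC ℓ χ (α + β) = dotC ℓ χ α + dotC ℓ χ β := by
  simp only [dotC, Pi.add_apply, Int.cast_add, mul_add, Finset.sum_add_distrib]

theorem dotC_sub (α β : ZMod ℓ → ℤ) : dotC ℓ χ (α - β) = dotC ℓ χ α - dotC ℓ χ β := by
  simp only [dotC, Pi.sub_apply, Int.cast_sub, mul_sub, Finset.sum_sub_distrib]

theorem dotC_nsmul (m : ℕ) (α : ZMod ℓ → ℤ) : dotC ℓ χ (m • α) = m * dotC ℓ χ α := by
  simp only [dotC, Pi.smul_apply, nsmul_eq_mul, Int.cast_mul, Int.cast_natCast, Finset.mul_sum,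
    mul_left_comm]

theorem dotC_deltaVec : dotC ℓ χ (deltaVec ℓ) = ∑ s, χ s := by
  simp [dotC, deltaVec]

theorem dotC_segVec (i j : ℕ) : dotC ℓ χ (segVec ℓ i j) = ∑ t ∈ Finset.Icc i j, χ t := by
  simp only [dotC, segVec, Int.cast_sum, Int.cast_ite, Int.cast_one, Int.cast_zero, mul_ite,
    mul_one, mul_zero, Finset.mul_sum]
  rw [Finset.sum_comm]
  exact Finset.sum_congr rfl fun t _ => by simp

variable {χ} {κ : ZMod ℓ → ℂ} {c : ℂ}
  (hχ : ∀ i, χ i = (ℓ : ℂ)⁻¹ + (κ i - κ (i + 1)) + (if i = 0 then c - 1 else 0))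
include hχ

theorem sum_chi_eq : ∑ s, χ s = c := by
  have hℓ : (ℓ : ℂ) ≠ 0 := Nat.cast_ne_zero.2 (NeZero.ne ℓ)
  have hshift : ∑ s : ZMod ℓ, κ (s + 1) = ∑ s, κ s := Equiv.sum_comp (Equiv.addRight 1) κ
  simp only [hχ, Finset.sum_add_distrib, Finset.sum_sub_distrib, hshift, Finset.sum_ite_eq',
    Finset.mem_univ, if_true, Finset.sum_const, Finset.card_univ, ZMod.card, nsmul_eq_mul]
  field_simp
  ring

theorem sum_Icc_chi_eq {i j : ℕ} (hi : 1 ≤ i) (hij : i ≤ j) (hj : j ≤ ℓ - 1) :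
    ∑ t ∈ Finset.Icc i j, χ t = κ i - κ (j + 1) + ((j : ℂ) + 1 - i) / ℓ := by
  have hℓ : 0 < ℓ := Nat.pos_of_ne_zero (NeZero.ne ℓ)
  have hχt : ∀ t ∈ Finset.Icc i j,
      χ t = (ℓ : ℂ)⁻¹ - (κ ((t + 1 : ℕ) : ZMod ℓ) - κ (t : ZMod ℓ)) := fun t ht => by
    rw [Finset.mem_Icc] at ht
    have ht0 : (t : ZMod ℓ) ≠ 0 := by
      rw [Ne, ZMod.natCast_eq_zero_iff]
      exact Nat.not_dvd_of_pos_of_lt (by omega) (by omega)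
    rw [hχ, if_neg ht0, Nat.cast_succ]
    ring
  rw [Finset.sum_congr rfl hχt, Finset.sum_sub_distrib,
    Finset.sum_Icc_sub hij fun t => κ (t : ZMod ℓ), Finset.sum_const, Nat.card_Icc, nsmul_eq_mul,
    Nat.cast_sub (by omega)]
  push_cast
  field_simp
  ring

end Pairing

theorem chi_notin_Z_on_Rn_iff_kappa_conditions_general
    (ℓ n : ℕ) [NeZero ℓ] (hn : 0 < n)
    (k00 k01 : ℂ) (κ : ZMod ℓ → ℂ)
    (χ : ZMod ℓ → ℂ)
    (hχ : ∀ i : ZMod ℓ,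
      χ i = (ℓ : ℂ)⁻¹ + (κ i - κ (i + 1)) + (if i = 0 then k00 - k01 - 1 else 0)) :
    (∀ α ∈ RnSet ℓ n, ¬ ∃ z : ℤ, dotC ℓ χ α = z) ↔
      ((∀ (m : ℕ) (j : ℤ), 1 ≤ m → m ≤ n → Int.gcd j (m : ℤ) = 1 →
          ¬ ∃ z : ℤ, k00 - k01 + (j : ℂ) / (m : ℂ) = z) ∧
       (∀ m i j : ℕ, m < n → 1 ≤ i → i ≤ j → j ≤ ℓ - 1 →
          ¬ ∃ z : ℤ, (m : ℂ) * (k00 - k01) + (κ (i : ZMod ℓ) - κ ((j : ZMod ℓ) + 1)) +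
            ((j : ℂ) + 1 - (i : ℂ)) / (ℓ : ℂ) = z) ∧
       (∀ m i j : ℕ, 1 ≤ m → m < n → 1 ≤ i → i ≤ j → j ≤ ℓ - 1 →
          ¬ ∃ z : ℤ, (m : ℂ) * (k00 - k01) - (κ (i : ZMod ℓ) - κ ((j : ZMod ℓ) + 1)) -
            ((j : ℂ) + 1 - (i : ℂ)) / (ℓ : ℂ) = z)) := by
  have hδ (m : ℕ) : dotC ℓ χ (m • deltaVec ℓ) = m * (k00 - k01) := by
    rw [dotC_nsmul, dotC_deltaVec, sum_chi_eq hχ]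
  have hseg {i j : ℕ} (hi : 1 ≤ i) (hij : i ≤ j) (hj : j ≤ ℓ - 1) :
      dotC ℓ χ (segVec ℓ i j) = κ i - κ (j + 1) + ((j : ℂ) + 1 - i) / ℓ := by
    rw [dotC_segVec, sum_Icc_chi_eq hχ hi hij hj]
  rw [forall_mem_RnSet_iff hn, ← forall_natCast_mul_not_int_iff_forall_add_div_not_int]
  simp +contextual only [dotC_add, dotC_sub, hδ, hseg, add_assoc, sub_sub]

theorem chi_notin_Z_on_Rn_iff_kappa_conditions
    (ℓ n : ℕ) [NeZero ℓ] (hn : 0 < n)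
    (k00 k01 : ℂ) (κ : ZMod ℓ → ℂ)
    (hk : k00 + k01 = 0) (hκ : ∑ i : ZMod ℓ, κ i = 0)
    (χ : ZMod ℓ → ℂ)
    (hχ : ∀ i : ZMod ℓ,
      χ i = (ℓ : ℂ)⁻¹ + (κ i - κ (i + 1)) + (if i = 0 then k00 - k01 - 1 else 0)) :
    (∀ α ∈ RnSet ℓ n, ¬ ∃ z : ℤ, dotC ℓ χ α = z) ↔
      ((∀ (m : ℕ) (j : ℤ), 1 ≤ m → m ≤ n → Int.gcd j (m : ℤ) = 1 →
          ¬ ∃ z : ℤ, k00 - k01 + (j : ℂ) / (m : ℂ) = z) ∧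
       (∀ m i j : ℕ, m < n → 1 ≤ i → i ≤ j → j ≤ ℓ - 1 →
          ¬ ∃ z : ℤ, (m : ℂ) * (k00 - k01) + (κ (i : ZMod ℓ) - κ ((j : ZMod ℓ) + 1)) +
            ((j : ℂ) + 1 - (i : ℂ)) / (ℓ : ℂ) = z) ∧
       (∀ m i j : ℕ, 1 ≤ m → m < n → 1 ≤ i → i ≤ j → j ≤ ℓ - 1 →
          ¬ ∃ z : ℤ, (m : ℂ) * (k00 - k01) - (κ (i : ZMod ℓ) - κ ((j : ZMod ℓ) + 1)) -
            ((j : ℂ) + 1 - (i : ℂ)) / (ℓ : ℂ) = z)) :=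
  chi_notin_Z_on_Rn_iff_kappa_conditions_general ℓ n hn k00 k01 κ χ hχ
end

section
/- For \ell = n = 2, the set \mathcal{Q}(2,2) of pairs (\lambda; \nu) \in \mathcal{P} \times \mathcal{P}_2 with res_2(\lambda) + sres_2(\nu) = 2\delta has exactly 41 elements, while the subset with \nu = \emptyset (i.e. \mathcal{P}_2(2), bipartitions of 2) has exactly 5 elements. -/
/-!
STATEMENT 17: For `ℓ = n = 2`, the set `𝒬(2,2)` of pairs `(λ;ν)` with
`res₂(λ) + sres₂(ν) = 2δ` has exactly 41 elements, while its subset with `ν = ∅`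
(i.e. `𝒫₂(2)`, the bipartitions of 2) has exactly 5 elements.
-/

/-- A partition: a weakly decreasing list of positive integers. -/
def IsPartitionList (l : List ℕ) : Prop :=
  l.Pairwise (· ≥ ·) ∧ ∀ x ∈ l, 0 < x

/-- The number of boxes `c ∈ {0, …, len-1}` of a single row whose (shifted) residue
`c + shift` equals `s` in `ℤ/ℓ`. -/
def rowResCount (ℓ : ℕ) (shift : ZMod ℓ) (len : ℕ) (s : ZMod ℓ) : ℕ :=
  ((List.range len).filter (fun c => ((c : ZMod ℓ) + shift = s : Prop))).length

/-- The `ℓ`-residue of a partition `lam`, shifted by `shift`. -/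
def partResVec (ℓ : ℕ) (shift : ZMod ℓ) (lam : List ℕ) (s : ZMod ℓ) : ℕ :=
  (lam.zipIdx.map (fun rc => rowResCount ℓ (shift - (rc.2 : ZMod ℓ)) rc.1 s)).sum

/-- The set `𝒬(n,ℓ)`. -/
def QSet (ℓ n : ℕ) [NeZero ℓ] : Set (List ℕ × (ZMod ℓ → List ℕ)) :=
  {p | IsPartitionList p.1 ∧ (∀ i, IsPartitionList (p.2 i)) ∧
    ∀ s : ZMod ℓ, partResVec ℓ 0 p.1 s + ∑ i : ZMod ℓ, partResVec ℓ i (p.2 i) s = n}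

/-!
Summing the defining equations of `𝒬(ℓ,n)` over all residues `s` shows that
`|λ| + ∑ᵢ |ν⁽ⁱ⁾| = ℓ n`, so each member of `𝒬(ℓ,n)` is a tuple of partitions of size at most `ℓ n`.
Both counts then become a finite search over such tuples, which the kernel carries out.
-/

instance (l : List ℕ) : Decidable (IsPartitionList l) := inferInstanceAs (Decidable (_ ∧ _))

instance (ℓ n : ℕ) [NeZero ℓ] : DecidablePred (· ∈ QSet ℓ n) :=
  fun _ => inferInstanceAs (Decidable (_ ∧ _ ∧ _))

theorem IsPartitionList.length_le_sum {l : List ℕ} (hl : IsPartitionList l) :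
    l.length ≤ l.sum :=
  l.length_le_sum_of_one_le hl.2

def boundedLists : ℕ → ℕ → List (List ℕ)
  | 0, _ => [[]]
  | n + 1, b => [] :: (List.range b).flatMap fun a => (boundedLists n b).map (a :: ·)

theorem mem_boundedLists {l : List ℕ} {n b : ℕ} (hlen : l.length ≤ n) (hlt : ∀ x ∈ l, x < b) :
    l ∈ boundedLists n b := by
  induction l generalizing n with
  | nil => cases n <;> simp [boundedLists]
  | cons a t ih =>
    obtain ⟨n, rfl⟩ : ∃ k, n = k + 1 := Nat.exists_eq_add_one.2 (by simp at hlen; omega)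
    simp only [List.forall_mem_cons] at hlt
    simp only [boundedLists, List.mem_cons, List.mem_flatMap, List.mem_range, List.mem_map]
    exact .inr ⟨a, hlt.1, t, ih (by simpa using hlen) hlt.2, rfl⟩

def partitionsOfSumLE (m : ℕ) : Finset (List ℕ) :=
  ((boundedLists m (m + 1)).filter fun l => IsPartitionList l ∧ l.sum ≤ m).toFinset

theorem mem_partitionsOfSumLE {l : List ℕ} {m : ℕ} :
    l ∈ partitionsOfSumLE m ↔ IsPartitionList l ∧ l.sum ≤ m := by
  simp only [partitionsOfSumLE, List.mem_toFinset, List.mem_filter, decide_eq_true_eq,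
    and_iff_right_iff_imp, and_imp]
  intro hl hm
  exact mem_boundedLists (hl.length_le_sum.trans hm) fun x hx =>
    Nat.lt_succ_of_le ((List.le_sum_of_mem hx).trans hm)

theorem sum_length_filter_eq_length {α β : Type*} [Fintype β] [DecidableEq β] (f : α → β)
    (L : List α) :
    ∑ b, (L.filter (f · = b)).length = L.length := by
  induction L with
  | nil => simp
  | cons a t ih =>
    simp only [← List.countP_eq_length_filter] at ih ⊢
    simp [List.countP_cons, Finset.sum_add_distrib, ih]

theorem sum_list_map_sum_comm {α β : Type*} [Fintype β] (L : List α) (g : α → β → ℕ) :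
    ∑ b, (L.map (g · b)).sum = (L.map fun a => ∑ b, g a b).sum := by
  induction L with
  | nil => simp
  | cons a t ih => simp [Finset.sum_add_distrib, ih]

section Residues

variable {ℓ : ℕ} [NeZero ℓ]

theorem sum_rowResCount (shift : ZMod ℓ) (len : ℕ) :
    ∑ s, rowResCount ℓ shift len s = len := by
  simp only [rowResCount, sum_length_filter_eq_length (· + shift)]
  simp

theorem sum_partResVec (shift : ZMod ℓ) (lam : List ℕ) :
    ∑ s, partResVec ℓ shift lam s = lam.sum := by
  simp only [partResVec, sum_list_map_sum_comm, sum_rowResCount]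
  exact congrArg List.sum (lam.zipIdx_map_fst 0)

theorem sum_sizes_of_mem_QSet {n : ℕ} {p : List ℕ × (ZMod ℓ → List ℕ)} (hp : p ∈ QSet ℓ n) :
    p.1.sum + ∑ i, (p.2 i).sum = ℓ * n := by
  calc p.1.sum + ∑ i, (p.2 i).sum
      = ∑ s, (partResVec ℓ 0 p.1 s + ∑ i, partResVec ℓ i (p.2 i) s) := by
        rw [Finset.sum_add_distrib, Finset.sum_comm]
        simp only [sum_partResVec]
    _ = ∑ _ : ZMod ℓ, n := Finset.sum_congr rfl fun s _ => hp.2.2 s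
    _ = ℓ * n := by simp

end Residues

def qSetCandidates (ℓ n : ℕ) [NeZero ℓ] : Finset (List ℕ × (ZMod ℓ → List ℕ)) :=
  partitionsOfSumLE (ℓ * n) ×ˢ Fintype.piFinset fun _ => partitionsOfSumLE (ℓ * n)

theorem QSet_subset_qSetCandidates (ℓ n : ℕ) [NeZero ℓ] : QSet ℓ n ⊆ qSetCandidates ℓ n := by
  intro p hp
  have hsize := sum_sizes_of_mem_QSet hp
  simp only [qSetCandidates, Finset.coe_product, Fintype.coe_piFinset, Set.mem_prod, Set.mem_pi,
    Set.mem_univ, Finset.mem_coe, mem_partitionsOfSumLE, forall_const]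
  refine ⟨⟨hp.1, by omega⟩, fun i => ⟨hp.2.1 i, ?_⟩⟩
  have := Finset.single_le_sum (fun j _ => Nat.zero_le ((p.2 j).sum)) (Finset.mem_univ i)
  omega

theorem Set.ncard_eq_card_filter_of_subset {α : Type*} {S : Set α} {F : Finset α}
    [DecidablePred (· ∈ S)] (h : S ⊆ F) : S.ncard = (F.filter (· ∈ S)).card := by
  rw [← Set.ncard_coe_finset, Finset.coe_filter]
  congr 1
  ext x
  exact ⟨fun hx => ⟨h hx, hx⟩, And.right⟩

theorem card_QSet_two_two :
    (QSet 2 2).ncard = 41 ∧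
    {p ∈ QSet 2 2 | ∀ i, p.2 i = []}.ncard = 5 := by
  have hsub := QSet_subset_qSetCandidates 2 2
  rw [Set.ncard_eq_card_filter_of_subset hsub,
    Set.ncard_eq_card_filter_of_subset ((Set.sep_subset _ _).trans hsub)]
  decide +kernel
end
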